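/- arXiv:1601.05187 — 3 statements merged into one kernel-verified Lean document; each statement's English description precedes it below -/
import Mathlib

section
/- Let ↣ be a dynamic policy over signature (D, dom, A) that has no edges from inactive domains (domains u with dom⁻¹(u) = ∅ satisfy α ⊨ u ↛ v for all α, v). If for every system M over the signature, M is ta^◇-secure with respect to ↣ iff M is ta^□-secure with respect to ↣, then ↣ is local. -/
/-!
Run the "history" system whose state is the trace itself. Observing `ta^◇ α u` makes it
trivially `ta^◇`-secure, and observing the `∼^□_u`-class of `α` makes it trivially
`ta^□`-secure; agreement of the two notions therefore forces `∼^□_u` (the unwinding relation)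
and `∼^◇_u` (equality of `ta^◇`) to coincide. Now let `α ∼_u β`, `α ∼_v β`, `α ⊨ u ↣ v` and
`β ⊭ u ↣ v`. If `u` has an action `a`, then WSC gives `aα ∼_v aβ`, yet `ta^◇ (aα) v` is a node
over `ta^◇ α v = ta^◇ β v = ta^◇ (aβ) v`, which is absurd. If `u` is inactive, the edge
`α ⊨ u ↣ v` is only possible for `v = u`, where it holds at every trace.
-/

open Classical

/-- Binary trees over actions, values of the `ta` purge functions. -/
inductive TATree (A : Type) : Type where
  | eps : TATree A
  | node : TATree A → TATree A → A → TATree A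

/-- Run a deterministic system along a trace (newest action at the head of the list). -/
def runL {S A : Type} (step : S → A → S) (s0 : S) : List A → S
  | [] => s0
  | a :: α => step (runL step s0 α) a

/-- The permissive purge function `ta^◇` for a dynamic policy `P`. -/
noncomputable def taD {D A : Type} (dm : A → D) (P : List A → D → D → Prop) :
    List A → D → TATree A
  | [], _ => TATree.eps
  | a :: α, u =>
    if P α (dm a) u then TATree.node (taD dm P α u) (taD dm P α (dm a)) a
    else taD dm P α u

/-- The unwinding relations: smallest family of equivalence relations on traces
satisfying WSC and DLR with respect to the dynamic policy `P`. -/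
inductive Unw {D A : Type} (dm : A → D) (P : List A → D → D → Prop) :
    D → List A → List A → Prop where
  | refl (u : D) (α : List A) : Unw dm P u α α
  | symm {u : D} {α β : List A} : Unw dm P u α β → Unw dm P u β α
  | trans {u : D} {α β γ : List A} : Unw dm P u α β → Unw dm P u β γ → Unw dm P u α γ
  | dlr (u : D) (α : List A) (a : A) : ¬ P α (dm a) u → Unw dm P u (a :: α) α
  | wsc (u : D) {α β : List A} (a : A) :
      Unw dm P u α β → Unw dm P (dm a) α β → Unw dm P u (a :: α) (a :: β)

/-- The prohibitive purge function `ta^□`, whose condition is distributed knowledge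
of the policy edge, interpreted over the Kripke structure given by the unwinding relations. -/
noncomputable def taB {D A : Type} (dm : A → D) (P : List A → D → D → Prop) :
    List A → D → TATree A
  | [], _ => TATree.eps
  | a :: α, u =>
    if (∀ β, Unw dm P u α β → Unw dm P (dm a) α β → P β (dm a) u) then
      TATree.node (taB dm P α u) (taB dm P α (dm a)) a
    else taB dm P α u

section

variable {D A : Type} (dm : A → D) (P : List A → D → D → Prop)

lemma runL_flip_cons_nil (α : List A) : runL (flip List.cons) [] α = α := by
  induction α with
  | nil => rfl
  | cons a α ih => simp only [runL, ih, flip]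

lemma TATree.node_ne_left (l r : TATree A) (a : A) : TATree.node l r a ≠ l := by
  intro h
  have := congrArg sizeOf h
  rw [TATree.node.sizeOf_spec] at this
  omega

def TaDSecure {S O : Type} (step : S → A → S) (s0 : S) (obs : D → S → O) : Prop :=
  ∀ u (α β : List A), taD dm P α u = taD dm P β u →
    obs u (runL step s0 α) = obs u (runL step s0 β)

def UnwSecure {S O : Type} (step : S → A → S) (s0 : S) (obs : D → S → O) : Prop :=
  ∀ u (α β : List A), Unw dm P u α β → obs u (runL step s0 α) = obs u (runL step s0 β)

def IsLocal : Prop :=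
  ∀ u v (α β : List A), taD dm P α u = taD dm P β u →
    taD dm P α v = taD dm P β v → (P α u v ↔ P β u v)

theorem taD_eq_of_unw
    (hsec : ∀ (O : Type) (obs : D → List A → O),
      TaDSecure dm P (flip List.cons) [] obs → UnwSecure dm P (flip List.cons) [] obs)
    {u : D} {α β : List A} (h : Unw dm P u α β) : taD dm P α u = taD dm P β u := by
  have hsecure : TaDSecure dm P (flip List.cons) [] fun w γ => taD dm P γ w := by
    intro w γ δ hw
    simpa only [runL_flip_cons_nil] using hw
  simpa only [runL_flip_cons_nil] using hsec _ _ hsecure u α β h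

theorem unw_of_taD_eq
    (hsec : ∀ (O : Type) (obs : D → List A → O),
      UnwSecure dm P (flip List.cons) [] obs → TaDSecure dm P (flip List.cons) [] obs)
    {u : D} {α β : List A} (h : taD dm P α u = taD dm P β u) : Unw dm P u α β := by
  have hsecure : UnwSecure dm P (flip List.cons) [] fun w γ => {δ | Unw dm P w γ δ} := by
    intro w γ δ hw
    simp only [runL_flip_cons_nil]
    ext ρ
    exact ⟨hw.symm.trans, hw.trans⟩
  have hclass := hsec _ _ hsecure u α β h
  simp only [runL_flip_cons_nil] at hclass
  exact (Set.ext_iff.mp hclass β).mpr (Unw.refl u β)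

theorem policy_edge_of_taD_eq_of_active
    (hunw : ∀ w (γ δ : List A), taD dm P γ w = taD dm P δ w → Unw dm P w γ δ)
    (htaD : ∀ w (γ δ : List A), Unw dm P w γ δ → taD dm P γ w = taD dm P δ w)
    {a : A} {v : D} {α β : List A} (hu : taD dm P α (dm a) = taD dm P β (dm a))
    (hv : taD dm P α v = taD dm P β v) (hα : P α (dm a) v) : P β (dm a) v := by
  by_contra hβ
  have hstep : taD dm P (a :: α) v = taD dm P (a :: β) v :=
    htaD v _ _ (Unw.wsc v a (hunw v α β hv) (hunw (dm a) α β hu))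
  simp only [taD, if_pos hα, if_neg hβ, ← hv] at hstep
  exact TATree.node_ne_left _ _ _ hstep

theorem isLocal_of_unw_iff_taD_eq
    (hrefl : ∀ α u, P α u u)
    (hinact : ∀ u, (∀ a, dm a ≠ u) → ∀ (α : List A) v, v ≠ u → ¬ P α u v)
    (hunw : ∀ u (α β : List A), Unw dm P u α β ↔ taD dm P α u = taD dm P β u) :
    IsLocal dm P := by
  have hedge : ∀ u v (α β : List A), taD dm P α u = taD dm P β u →
      taD dm P α v = taD dm P β v → P α u v → P β u v := by
    intro u v α β hu hv hα
    by_cases hactive : ∃ a, dm a = u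
    · obtain ⟨a, rfl⟩ := hactive
      exact policy_edge_of_taD_eq_of_active dm P (fun w γ δ => (hunw w γ δ).mpr)
        (fun w γ δ => (hunw w γ δ).mp) hu hv hα
    · obtain rfl : v = u := by
        by_contra hvu
        exact hinact u (fun a ha => hactive ⟨a, ha⟩) α v hvu hα
      exact hrefl β v
  exact fun u v α β hu hv => ⟨hedge u v α β hu hv, hedge u v β α hu.symm hv.symm⟩

end

/-- if a policy with no edges from inactive domains makes `ta^◇`-security and
`ta^□`-security agree on every system, then the policy is local. -/
theorem statement_8 {D A : Type} (dm : A → D) (P : List A → D → D → Prop)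
    (hrefl : ∀ α u, P α u u)
    (hinact : ∀ u, (∀ a, dm a ≠ u) → ∀ (α : List A) v, v ≠ u → ¬ P α u v)
    (hsec : ∀ (S O : Type) (step : S → A → S) (s0 : S) (obs : D → S → O),
      (∀ u (α β : List A), taD dm P α u = taD dm P β u →
          obs u (runL step s0 α) = obs u (runL step s0 β)) ↔
      (∀ u (α β : List A), Unw dm P u α β →
          obs u (runL step s0 α) = obs u (runL step s0 β))) :
    ∀ u v (α β : List A), taD dm P α u = taD dm P β u →
        taD dm P α v = taD dm P β v → (P α u v ↔ P β u v) := by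
  refine isLocal_of_unw_iff_taD_eq dm P hrefl hinact fun u α β => ⟨?_, ?_⟩
  · exact taD_eq_of_unw dm P (fun O obs => (hsec _ O _ _ obs).mp)
  · exact unw_of_taD_eq dm P (fun O obs => (hsec _ O _ _ obs).mpr)
end

section
/- For every dynamic policy ↣ over signature (D, dom, A), there exists a local policy ↣' ≤ ↣ such that for all systems M over the signature, M is ta^□-secure with respect to ↣ if and only if M is ta^□-secure with respect to ↣'. Specifically, one may take α ⊨ u ↣' v iff β ⊨ u ↣ v for all β with β ∼ᵘⁿʷ_u α and β ∼ᵘⁿʷ_v α, where ∼ᵘⁿʷ are the unwinding relations of ↣. -/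
open Classical

/-!
Localising a policy does not change its unwinding relations. An edge `dm a ↣ u` that the
localised policy drops at `α` is missing in `P` at some `β` with `α ∼_u β` and `α ∼_{dm a} β`; then
`a :: α ∼_u a :: β ∼_u β ∼_u α` by WSC, DLR and the choice of `β`, so every DLR step of the
localised policy is already derivable for `P`. Locality then holds because equal `ta^◇` trees
for the localised policy witness unwinding equivalence, and the localised edge is by
construction invariant under joint unwinding equivalence.
-/

section Unwinding

variable {D A : Type} (dm : A → D)

theorem taD_cons_of_not {Q : List A → D → D → Prop} {α : List A} {a : A} {u : D}
    (h : ¬ Q α (dm a) u) : taD dm Q (a :: α) u = taD dm Q α u := by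
  rw [taD, if_neg h]

theorem Unw.of_policy_le {P Q : List A → D → D → Prop} (hle : ∀ α u v, Q α u v → P α u v)
    {u : D} {α β : List A} (h : Unw dm P u α β) : Unw dm Q u α β := by
  induction h with
  | refl u α => exact .refl u α
  | symm _ ih => exact ih.symm
  | trans _ _ ih₁ ih₂ => exact ih₁.trans ih₂
  | dlr u α a hP => exact .dlr u α a (fun hQ => hP (hle _ _ _ hQ))
  | wsc u a _ _ ih₁ ih₂ => exact .wsc u a ih₁ ih₂

theorem unw_of_taD_eq_s9 {Q : List A → D → D → Prop} {α β : List A} {u : D}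
    (h : taD dm Q α u = taD dm Q β u) : Unw dm Q u α β := by
  induction α generalizing β u with
  | nil =>
    induction β with
    | nil => exact .refl u []
    | cons b β ihβ =>
      by_cases hb : Q β (dm b) u
      · simp [taD, hb] at h
      · exact (ihβ (h.trans (taD_cons_of_not dm hb))).trans (.symm (.dlr u β b hb))
  | cons a α ihα =>
    by_cases ha : Q α (dm a) u
    · induction β with
      | nil => simp [taD, ha] at h
      | cons b β ihβ =>
        by_cases hb : Q β (dm b) u
        · simp only [taD, ha, hb, if_true, TATree.node.injEq] at h
          obtain ⟨h₁, h₂, rfl⟩ := h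
          exact .wsc u a (ihα h₁) (ihα h₂)
        · exact (ihβ (h.trans (taD_cons_of_not dm hb))).trans (.symm (.dlr u β b hb))
    · exact (Unw.dlr u α a ha).trans (ihα ((taD_cons_of_not dm ha).symm.trans h))

end Unwinding

section LocalPolicy

variable {D A : Type} (dm : A → D) (P : List A → D → D → Prop)

def localPolicy (α : List A) (u v : D) : Prop :=
  ∀ β, Unw dm P u α β → Unw dm P v α β → P β u v

theorem localPolicy_le (α : List A) (u v : D) (h : localPolicy dm P α u v) : P α u v :=
  h α (.refl u α) (.refl v α)

theorem localPolicy_congr {u v : D} {α β : List A} (hu : Unw dm P u α β)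
    (hv : Unw dm P v α β) : localPolicy dm P α u v ↔ localPolicy dm P β u v :=
  ⟨fun h γ hu' hv' => h γ (hu.trans hu') (hv.trans hv'),
    fun h γ hu' hv' => h γ (hu.symm.trans hu') (hv.symm.trans hv')⟩

theorem unw_localPolicy_iff {u : D} {α β : List A} :
    Unw dm (localPolicy dm P) u α β ↔ Unw dm P u α β := by
  refine ⟨fun h => ?_, Unw.of_policy_le dm (localPolicy_le dm P)⟩
  induction h with
  | refl u α => exact .refl u α
  | symm _ ih => exact ih.symm
  | trans _ _ ih₁ ih₂ => exact ih₁.trans ih₂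
  | dlr u α a hloc =>
    obtain ⟨β, ha, hu, hP⟩ : ∃ β, Unw dm P (dm a) α β ∧ Unw dm P u α β ∧ ¬ P β (dm a) u := by
      simpa [localPolicy] using hloc
    exact ((Unw.wsc u a hu ha).trans (.dlr u β a hP)).trans hu.symm
  | wsc u a _ _ ih₁ ih₂ => exact .wsc u a ih₁ ih₂

end LocalPolicy

theorem statement_9_general {D A : Type} (dm : A → D) (P : List A → D → D → Prop) :
    ∃ P' : List A → D → D → Prop,
      (∀ (α : List A) u v, P' α u v ↔ ∀ β, Unw dm P u α β → Unw dm P v α β → P β u v) ∧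
      (∀ (α : List A) u v, P' α u v → P α u v) ∧
      (∀ u v (α β : List A), taD dm P' α u = taD dm P' β u →
          taD dm P' α v = taD dm P' β v → (P' α u v ↔ P' β u v)) ∧
      (∀ (S O : Type) (step : S → A → S) (s0 : S) (obs : D → S → O),
        (∀ u (α β : List A), Unw dm P u α β →
            obs u (runL step s0 α) = obs u (runL step s0 β)) ↔
        (∀ u (α β : List A), Unw dm P' u α β →
            obs u (runL step s0 α) = obs u (runL step s0 β))) := by
  refine ⟨localPolicy dm P, fun _ _ _ => Iff.rfl, localPolicy_le dm P, ?_, ?_⟩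
  · intro u v α β hu hv
    exact localPolicy_congr dm P ((unw_localPolicy_iff dm P).1 (unw_of_taD_eq_s9 dm hu))
      ((unw_localPolicy_iff dm P).1 (unw_of_taD_eq_s9 dm hv))
  · intro S O step s0 obs
    simp only [unw_localPolicy_iff]

/-- every policy admits a local, more restrictive policy that is equivalent
with respect to `ta^□`-security; specifically, `P' α u v` holds iff `P β u v` holds for all
`β` unwinding-equivalent to `α` for both `u` and `v`. -/
theorem statement_9 {D A : Type} (dm : A → D) (P : List A → D → D → Prop)
    (hrefl : ∀ α u, P α u u) :
    ∃ P' : List A → D → D → Prop,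
      (∀ (α : List A) u v, P' α u v ↔ ∀ β, Unw dm P u α β → Unw dm P v α β → P β u v) ∧
      (∀ (α : List A) u v, P' α u v → P α u v) ∧
      (∀ u v (α β : List A), taD dm P' α u = taD dm P' β u →
          taD dm P' α v = taD dm P' β v → (P' α u v ↔ P' β u v)) ∧
      (∀ (S O : Type) (step : S → A → S) (s0 : S) (obs : D → S → O),
        (∀ u (α β : List A), Unw dm P u α β →
            obs u (runL step s0 α) = obs u (runL step s0 β)) ↔
        (∀ u (α β : List A), Unw dm P' u α β →
            obs u (runL step s0 α) = obs u (runL step s0 β))) :=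
  statement_9_general dm P
end

section
/- Access control completeness: if system M is ta^◇-secure with respect to dynamic policy ↣, then unfold(M) admits an access control interpretation (choices of O, V, contents, observe, alter) satisfying DRM-1 through DRM-6 with respect to ↣. Moreover if M is ta^□-secure with respect to ↣, there exists a local policy ↣' ≤ ↣ such that unfold(M) admits an access control interpretation consistent with ↣' additionally satisfying DRM-5'. -/
open Classical

/-- The dynamic reference monitor conditions DRM-1 … DRM-6 for the unfolding of a system
(states are traces, the step function conses actions, observations are inherited). -/
def DRMunfold {D A S Out Obj Val : Type} (dm : A → D) (P : List A → D → D → Prop)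
    (step : S → A → S) (s0 : S) (obs : D → S → Out)
    (contents : Obj → List A → Val) (observe alter : D → List A → Set Obj) : Prop :=
  -- DRM-1
  (∀ u (α β : List A), (∀ o ∈ observe u α, contents o α = contents o β) →
      obs u (runL step s0 α) = obs u (runL step s0 β)) ∧
  -- DRM-2
  (∀ (a : A) (α β : List A) (o : Obj), o ∈ alter (dm a) α → o ∈ alter (dm a) β →
      (∀ o' ∈ observe (dm a) α, contents o' α = contents o' β) →
      contents o α = contents o β → contents o (a :: α) = contents o (a :: β)) ∧
  -- DRM-3
  (∀ (a : A) (α : List A) (o : Obj), contents o (a :: α) ≠ contents o α → o ∈ alter (dm a) α) ∧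
  -- DRM-4
  (∀ u (α : List A) (a : A), observe u (a :: α) \ observe u α ⊆ observe (dm a) α) ∧
  -- DRM-5
  (∀ u v (α β : List A), P α v u → P β v u →
      (∀ o ∈ observe u α, contents o α = contents o β) →
      (∀ o ∈ observe v α, contents o α = contents o β) →
      observe u α ∩ alter v α = observe u β ∩ alter v β) ∧
  -- DRM-6
  (∀ u v (α : List A), (alter u α ∩ observe v α).Nonempty → P α u v)

/-! The data object of `u` holds the permissive purge `ta^◇_u(α)`, so `ta^◇`-security is exactly
DRM-1, and the alter sets are read off the policy, which gives DRM-2, DRM-3, DRM-5 and DRM-6.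
For `ta^□`-security one refines `↣` to the edges that both endpoints jointly know over the
unwinding relations: the permissive purge of this refined policy is the prohibitive purge of `↣`,
equal purges force unwinding-equivalent traces, and along those the refined edges cannot change,
which is locality and DRM-5'. -/

section Interpretation

variable {D A : Type}

def observeSet (u : D) : Set (D ⊕ D) := {.inl u, .inr u}

def alterSet (Q : List A → D → D → Prop) (v : D) (α : List A) : Set (D ⊕ D) :=
  {x | ∃ w, x = .inl w ∧ Q α v w}

/-- `Sum.inl u` is the data object `u` and `Sum.inr u` is `oset(u)`. -/
noncomputable def purgeContents (dm : A → D) (Q : List A → D → D → Prop) :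
    D ⊕ D → List A → TATree A ⊕ Set (D ⊕ D)
  | .inl u, α => .inl (taD dm Q α u)
  | .inr u, _ => .inr (observeSet u)

lemma mem_observeSet_inter_alterSet {Q : List A → D → D → Prop} {u v : D} {α : List A}
    {x : D ⊕ D} : x ∈ observeSet u ∩ alterSet Q v α ↔ x = .inl u ∧ Q α v u := by
  constructor
  · rintro ⟨hx | hx, w, rfl, hq⟩
    · cases hx
      exact ⟨rfl, hq⟩
    · cases hx
  · rintro ⟨rfl, hq⟩
    exact ⟨.inl rfl, u, rfl, hq⟩

lemma observeSet_inter_alterSet_congr {Q : List A → D → D → Prop} {u v : D} {α β : List A}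
    (h : Q α v u ↔ Q β v u) :
    observeSet u ∩ alterSet Q v α = observeSet u ∩ alterSet Q v β := by
  ext x
  simp only [mem_observeSet_inter_alterSet, h]

lemma taD_cons_of_pos {dm : A → D} {Q : List A → D → D → Prop} {u : D} {α : List A} {a : A}
    (h : Q α (dm a) u) :
    taD dm Q (a :: α) u = .node (taD dm Q α u) (taD dm Q α (dm a)) a := by
  rw [taD, if_pos h]

lemma taD_cons_of_neg {dm : A → D} {Q : List A → D → D → Prop} {u : D} {α : List A} {a : A}
    (h : ¬ Q α (dm a) u) : taD dm Q (a :: α) u = taD dm Q α u := by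
  rw [taD, if_neg h]

lemma purgeContents_eq_iff {dm : A → D} {Q : List A → D → D → Prop} {u : D} {α β : List A} :
    purgeContents dm Q (.inl u) α = purgeContents dm Q (.inl u) β ↔
      taD dm Q α u = taD dm Q β u := by
  simp [purgeContents]

lemma drmUnfold_purgeContents {S Out : Type} (dm : A → D) (Q : List A → D → D → Prop)
    (step : S → A → S) (s0 : S) (obs : D → S → Out)
    (hsec : ∀ u (α β : List A), taD dm Q α u = taD dm Q β u →
      obs u (runL step s0 α) = obs u (runL step s0 β)) :
    DRMunfold dm Q step s0 obs (purgeContents dm Q) (fun u _ => observeSet u) (alterSet Q) := by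
  refine ⟨?drm1, ?drm2, ?drm3, ?drm4, ?drm5, ?drm6⟩
  case drm1 =>
    exact fun u α β h => hsec u α β (purgeContents_eq_iff.mp (h (.inl u) (.inl rfl)))
  case drm2 =>
    rintro a α β _ ⟨w, rfl, hα⟩ ⟨w, ⟨⟩, hβ⟩ hobs hw
    have ha := purgeContents_eq_iff.mp (hobs (.inl (dm a)) (.inl rfl))
    rw [purgeContents_eq_iff, taD_cons_of_pos hα, taD_cons_of_pos hβ,
      purgeContents_eq_iff.mp hw, ha]
  case drm3 =>
    rintro a α (w | w) h
    · by_contra hw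
      exact h (by rw [purgeContents, purgeContents, taD_cons_of_neg fun hq => hw ⟨w, rfl, hq⟩])
    · exact absurd rfl h
  case drm4 => exact fun u α a x hx => absurd hx.1 hx.2
  case drm5 =>
    exact fun u v α β hα hβ _ _ => observeSet_inter_alterSet_congr (iff_of_true hα hβ)
  case drm6 =>
    rintro u v α ⟨x, hx⟩
    exact (mem_observeSet_inter_alterSet.mp ⟨hx.2, hx.1⟩).2

lemma drm5'_purgeContents (dm : A → D) (Q : List A → D → D → Prop)
    (hloc : ∀ u v (α β : List A), taD dm Q α u = taD dm Q β u →
      taD dm Q α v = taD dm Q β v → (Q α u v ↔ Q β u v))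
    (u v : D) (α β : List A)
    (hu : ∀ o ∈ observeSet u, purgeContents dm Q o α = purgeContents dm Q o β)
    (hv : ∀ o ∈ observeSet v, purgeContents dm Q o α = purgeContents dm Q o β) :
    observeSet u ∩ alterSet Q v α = observeSet u ∩ alterSet Q v β :=
  observeSet_inter_alterSet_congr <| hloc v u α β
    (purgeContents_eq_iff.mp (hv _ (.inl rfl))) (purgeContents_eq_iff.mp (hu _ (.inl rfl)))

end Interpretation

section KnownPolicy

variable {D A : Type} {dm : A → D} {P : List A → D → D → Prop}

def knownPolicy (dm : A → D) (P : List A → D → D → Prop) (α : List A) (u v : D) : Prop :=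
  ∀ β, Unw dm P v α β → Unw dm P u α β → P β u v

lemma knownPolicy_le {α : List A} {u v : D} (h : knownPolicy dm P α u v) : P α u v :=
  h α (.refl v α) (.refl u α)

lemma knownPolicy_congr {u v : D} {α β : List A} (hu : Unw dm P u α β) (hv : Unw dm P v α β) :
    knownPolicy dm P α u v ↔ knownPolicy dm P β u v :=
  ⟨fun h γ hvγ huγ => h γ (hv.trans hvγ) (hu.trans huγ),
    fun h γ hvγ huγ => h γ (hv.symm.trans hvγ) (hu.symm.trans huγ)⟩

lemma Unw.cons_of_not_knownPolicy {u : D} {α : List A} {a : A}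
    (h : ¬ knownPolicy dm P α (dm a) u) : Unw dm P u (a :: α) α := by
  obtain ⟨γ, hu, ha, hP⟩ : ∃ γ, Unw dm P u α γ ∧ Unw dm P (dm a) α γ ∧ ¬ P γ (dm a) u := by
    simpa [knownPolicy] using h
  exact ((Unw.wsc u a hu ha).trans (.dlr u γ a hP)).trans hu.symm

lemma Unw.of_taD_knownPolicy_eq {u : D} {α β : List A}
    (h : taD dm (knownPolicy dm P) α u = taD dm (knownPolicy dm P) β u) : Unw dm P u α β := by
  induction α generalizing u β with
  | nil =>
    induction β with
    | nil => exact .refl u []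
    | cons b β ih =>
      by_cases hb : knownPolicy dm P β (dm b) u
      · rw [taD_cons_of_pos hb] at h
        cases h
      · rw [taD_cons_of_neg hb] at h
        exact (ih h).trans (Unw.cons_of_not_knownPolicy hb).symm
  | cons a α ihα =>
    by_cases ha : knownPolicy dm P α (dm a) u
    · induction β with
      | nil =>
        rw [taD_cons_of_pos ha] at h
        cases h
      | cons b β ihβ =>
        by_cases hb : knownPolicy dm P β (dm b) u
        · rw [taD_cons_of_pos ha, taD_cons_of_pos hb] at h
          obtain ⟨hu, hab, rfl⟩ := TATree.node.inj h
          exact .wsc u a (ihα hu) (ihα hab)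
        · rw [taD_cons_of_neg hb] at h
          exact (ihβ h).trans (Unw.cons_of_not_knownPolicy hb).symm
    · rw [taD_cons_of_neg ha] at h
      exact (Unw.cons_of_not_knownPolicy ha).trans (ihα h)

lemma knownPolicy_local {u v : D} {α β : List A}
    (hu : taD dm (knownPolicy dm P) α u = taD dm (knownPolicy dm P) β u)
    (hv : taD dm (knownPolicy dm P) α v = taD dm (knownPolicy dm P) β v) :
    knownPolicy dm P α u v ↔ knownPolicy dm P β u v :=
  knownPolicy_congr (Unw.of_taD_knownPolicy_eq hu) (Unw.of_taD_knownPolicy_eq hv)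

end KnownPolicy

theorem statement_19_general {D A S Out : Type} (dm : A → D) (P : List A → D → D → Prop)
    (step : S → A → S) (s0 : S) (obs : D → S → Out) :
    ((∀ u (α β : List A), taD dm P α u = taD dm P β u →
        obs u (runL step s0 α) = obs u (runL step s0 β)) →
      ∃ (Obj Val : Type) (contents : Obj → List A → Val)
        (observe alter : D → List A → Set Obj) (oset : D → Obj) (osetVal : Set Obj → Val),
        Function.Injective osetVal ∧
        (∀ u (α : List A), contents (oset u) α = osetVal (observe u α)) ∧
        (∀ u (α : List A), oset u ∈ observe u α) ∧
        DRMunfold dm P step s0 obs contents observe alter) ∧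
    ((∀ u (α β : List A), Unw dm P u α β →
        obs u (runL step s0 α) = obs u (runL step s0 β)) →
      ∃ P' : List A → D → D → Prop,
        (∀ (α : List A) u v, P' α u v → P α u v) ∧
        (∀ u v (α β : List A), taD dm P' α u = taD dm P' β u →
            taD dm P' α v = taD dm P' β v → (P' α u v ↔ P' β u v)) ∧
        ∃ (Obj Val : Type) (contents : Obj → List A → Val)
          (observe alter : D → List A → Set Obj) (oset : D → Obj) (osetVal : Set Obj → Val),
          Function.Injective osetVal ∧
          (∀ u (α : List A), contents (oset u) α = osetVal (observe u α)) ∧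
          (∀ u (α : List A), oset u ∈ observe u α) ∧
          DRMunfold dm P' step s0 obs contents observe alter ∧
          (∀ u v (α β : List A),
            (∀ o ∈ observe u α, contents o α = contents o β) →
            (∀ o ∈ observe v α, contents o α = contents o β) →
            observe u α ∩ alter v α = observe u β ∩ alter v β)) := by
  refine ⟨fun hsec => ?permissive, fun hsec => ?prohibitive⟩
  case permissive =>
    exact ⟨_, _, purgeContents dm P, fun u _ => observeSet u, alterSet P, .inr, .inr,
      Sum.inr_injective, fun _ _ => rfl, fun _ _ => .inr rfl,
      drmUnfold_purgeContents dm P step s0 obs hsec⟩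
  case prohibitive =>
    have hsec' : ∀ u (α β : List A), taD dm (knownPolicy dm P) α u = taD dm (knownPolicy dm P) β u →
        obs u (runL step s0 α) = obs u (runL step s0 β) :=
      fun u α β h => hsec u α β (Unw.of_taD_knownPolicy_eq h)
    exact ⟨knownPolicy dm P, fun _ _ _ => knownPolicy_le, fun _ _ _ _ => knownPolicy_local,
      _, _, purgeContents dm (knownPolicy dm P), fun u _ => observeSet u,
      alterSet (knownPolicy dm P), .inr, .inr, Sum.inr_injective, fun _ _ => rfl,
      fun _ _ => .inr rfl, drmUnfold_purgeContents dm _ step s0 obs hsec',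
      drm5'_purgeContents dm _ fun _ _ _ _ => knownPolicy_local⟩

/-- access control completeness: a `ta^◇`-secure system's unfolding admits an
access control interpretation satisfying DRM-1 … DRM-6; a `ta^□`-secure system's unfolding
admits one, consistent with some local more-restrictive policy, that also satisfies DRM-5'. -/
theorem statement_19 {D A S Out : Type} (dm : A → D) (P : List A → D → D → Prop)
    (hrefl : ∀ α u, P α u u)
    (step : S → A → S) (s0 : S) (obs : D → S → Out) :
    ((∀ u (α β : List A), taD dm P α u = taD dm P β u →
        obs u (runL step s0 α) = obs u (runL step s0 β)) →
      ∃ (Obj Val : Type) (contents : Obj → List A → Val)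
        (observe alter : D → List A → Set Obj) (oset : D → Obj) (osetVal : Set Obj → Val),
        Function.Injective osetVal ∧
        (∀ u (α : List A), contents (oset u) α = osetVal (observe u α)) ∧
        (∀ u (α : List A), oset u ∈ observe u α) ∧
        DRMunfold dm P step s0 obs contents observe alter) ∧
    ((∀ u (α β : List A), Unw dm P u α β →
        obs u (runL step s0 α) = obs u (runL step s0 β)) →
      ∃ P' : List A → D → D → Prop,
        (∀ (α : List A) u v, P' α u v → P α u v) ∧
        (∀ u v (α β : List A), taD dm P' α u = taD dm P' β u →
            taD dm P' α v = taD dm P' β v → (P' α u v ↔ P' β u v)) ∧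
        ∃ (Obj Val : Type) (contents : Obj → List A → Val)
          (observe alter : D → List A → Set Obj) (oset : D → Obj) (osetVal : Set Obj → Val),
          Function.Injective osetVal ∧
          (∀ u (α : List A), contents (oset u) α = osetVal (observe u α)) ∧
          (∀ u (α : List A), oset u ∈ observe u α) ∧
          DRMunfold dm P' step s0 obs contents observe alter ∧
          (∀ u v (α β : List A),
            (∀ o ∈ observe u α, contents o α = contents o β) →
            (∀ o ∈ observe v α, contents o α = contents o β) →
            observe u α ∩ alter v α = observe u β ∩ alter v β)) :=
  statement_19_general dm P step s0 obs
end
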